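/- arXiv:2008.00050 — 6 statements merged into one kernel-verified Lean document; each statement's English description precedes it below -/
import Mathlib

section
/- Let n ≥ 1, let a₁,…,aₙ be positive even integers and e₁,…,eₙ ∈ {±1}, and let σ = M(a₁,e₁)···M(aₙ,eₙ), where M(a,e) is the matrix (a,e;1,0). Suppose ω > 1 is an irrational real number fixed by the Möbius action of σ. Then ω is a quadratic irrational, its conjugate satisfies ω* ∈ (−1,1), and −ω* is a fixed point of the Möbius action of the matrix N = (0,eₙ;1,aₙ)·(0,e_{n−1};1,a_{n−1})···(0,e₁;1,a₁). (This is the ECF analogue of the Galois formula: −ω* equals the dual ECF value ⟨⟨(aₙ,eₙ),…,(a₁,e₁)⟩⟩ with the periodic block reversed.) -/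
noncomputable section

/-- `ω'` is the conjugate of the quadratic irrational `ω`: both are roots of the
minimal integer polynomial `A X^2 + B X + C` of `ω` (with `A > 0`, `gcd(A,B,C) = 1`),
and `ω' ≠ ω`. -/
def IsConjPair (ω ω' : ℝ) : Prop :=
  Irrational ω ∧ ∃ A B C : ℤ, 0 < A ∧ Int.gcd (Int.gcd A B : ℤ) C = 1 ∧
    (A : ℝ) * ω ^ 2 + B * ω + C = 0 ∧ (A : ℝ) * ω' ^ 2 + B * ω' + C = 0 ∧ ω' ≠ ω

/-- The quadratic irrational `ω` has discriminant `Δ = B^2 - 4AC`, where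
`A X^2 + B X + C` is its minimal integer polynomial (`A > 0`, `gcd(A,B,C) = 1`). -/
def HasDisc (ω : ℝ) (Δ : ℤ) : Prop :=
  Irrational ω ∧ ∃ A B C : ℤ, 0 < A ∧ Int.gcd (Int.gcd A B : ℤ) C = 1 ∧
    (A : ℝ) * ω ^ 2 + B * ω + C = 0 ∧ Δ = B ^ 2 - 4 * A * C

/-- The matrix `M(a,e) = (a, e; 1, 0)`. -/
def Mmat (a e : ℤ) : Matrix (Fin 2) (Fin 2) ℤ := !![a, e; 1, 0]

/-- Möbius action of an integer matrix `(a, b; c, d)` on a real number: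
`x ↦ (a x + b) / (c x + d)`. -/
def moebius (m : Matrix (Fin 2) (Fin 2) ℤ) (x : ℝ) : ℝ :=
  ((m 0 0 : ℝ) * x + m 0 1) / ((m 1 0 : ℝ) * x + m 1 1)


/-! Write `σ = (A B; C D)`. Its fixed points are the roots of
`f(x) = C x² + (D - A) x - B`, and `ω*` is the second root. Induction on `n` shows
`|D| < C` and `|B - D| ≤ A - C`, hence `f(1) ≤ 0 < f(-1)`; as `ω > 1`, this puts `ω*` in
`(-1, 1]`, and `ω* ≠ 1` by irrationality. The reversed product of the `(0, e; 1, a)` is the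
anti-diagonal transpose `(D B; C A)` of `σ`, whose fixed-point quadratic at `-x` is `f(x)`. -/

open Matrix

lemma Int.exists_primitive_triple {c b d : ℤ} (hc : 0 < c) :
    ∃ k A B C : ℤ, 0 < k ∧ 0 < A ∧ Int.gcd (Int.gcd A B : ℤ) C = 1 ∧
      c = k * A ∧ b = k * B ∧ d = k * C := by
  set g : ℤ := (Int.gcd (Int.gcd c b : ℤ) d : ℤ)
  have hg : 0 < Int.gcd (Int.gcd c b : ℤ) d :=
    Int.gcd_pos_iff.2 (Or.inl (by exact_mod_cast (Int.gcd_pos_iff.2 (Or.inl hc.ne')).ne'))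
  have hgcb : g ∣ Int.gcd c b := Int.gcd_dvd_left _ _
  have hgc : g ∣ c := hgcb.trans (Int.gcd_dvd_left _ _)
  have hgb : g ∣ b := hgcb.trans (Int.gcd_dvd_right _ _)
  have hgd : g ∣ d := Int.gcd_dvd_right _ _
  refine ⟨g, c / g, b / g, d / g, by positivity, Int.ediv_pos_of_pos_of_dvd hc (by positivity) hgc,
    ?_, (Int.mul_ediv_cancel' hgc).symm, (Int.mul_ediv_cancel' hgb).symm,
    (Int.mul_ediv_cancel' hgd).symm⟩
  rw [Int.gcd_div hgc hgb, Int.natAbs_natCast, Int.natCast_div]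
  exact Int.gcd_div_gcd_div_gcd hg

lemma isConjPair_of_roots {ω ω' : ℝ} (hω : Irrational ω) (hne : ω' ≠ ω) {c b d : ℤ}
    (hc : 0 < c) (h : (c : ℝ) * ω ^ 2 + b * ω + d = 0) (h' : (c : ℝ) * ω' ^ 2 + b * ω' + d = 0) :
    IsConjPair ω ω' := by
  obtain ⟨k, A, B, C, hk, hA, hgcd, rfl, rfl, rfl⟩ :=
    Int.exists_primitive_triple (b := b) (d := d) hc
  have hk' : (k : ℝ) ≠ 0 := by exact_mod_cast hk.ne'
  have hroot : ∀ x : ℝ, ((k * A : ℤ) : ℝ) * x ^ 2 + (k * B : ℤ) * x + (k * C : ℤ) = 0 →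
      (A : ℝ) * x ^ 2 + B * x + C = 0 := fun x hx =>
    (mul_eq_zero.1 (by push_cast at hx; linear_combination hx)).resolve_left hk'
  exact ⟨hω, A, B, C, hA, hgcd, hroot ω h, hroot ω' h', hne⟩

def antiTranspose {R : Type*} (m : Matrix (Fin 2) (Fin 2) R) : Matrix (Fin 2) (Fin 2) R :=
  !![m 1 1, m 0 1; m 1 0, m 0 0]

section antiTranspose

variable {R : Type*} [CommRing R]

lemma antiTranspose_mul (x y : Matrix (Fin 2) (Fin 2) R) :
    antiTranspose (x * y) = antiTranspose y * antiTranspose x := by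
  ext i j
  fin_cases i <;> fin_cases j <;>
    simp [antiTranspose, mul_apply, Fin.sum_univ_two] <;> ring

lemma antiTranspose_list_prod (l : List (Matrix (Fin 2) (Fin 2) R)) :
    antiTranspose l.prod = (l.map antiTranspose).reverse.prod := by
  induction l with
  | nil => ext i j; fin_cases i <;> fin_cases j <;> rfl
  | cons x l ih => simp [antiTranspose_mul, ih]

end antiTranspose

lemma antiTranspose_Mmat (a e : ℤ) : antiTranspose (Mmat a e) = !![0, e; 1, a] := by
  simp [antiTranspose, Mmat]

def ECFBound (m : Matrix (Fin 2) (Fin 2) ℤ) : Prop :=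
  |m 1 1| < m 1 0 ∧ |m 0 1 - m 1 1| ≤ m 0 0 - m 1 0

lemma ecfBound_Mmat {a e : ℤ} (ha : 2 ≤ a) (he : |e| = 1) : ECFBound (Mmat a e) := by
  simp [ECFBound, Mmat, he]
  omega

lemma ECFBound.mul_Mmat {m : Matrix (Fin 2) (Fin 2) ℤ} (hm : ECFBound m) {a e : ℤ}
    (ha : 2 ≤ a) (he : |e| = 1) : ECFBound (m * Mmat a e) := by
  obtain ⟨h₁, h₂⟩ := hm
  have hc : 0 < m 1 0 := (abs_nonneg _).trans_lt h₁
  have hac : 0 ≤ m 0 0 - m 1 0 := (abs_nonneg _).trans h₂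
  obtain ⟨hd, -⟩ := abs_lt.1 h₁
  obtain ⟨hbd, -⟩ := abs_le.1 h₂
  -- `(A B; C D) * M(a, e) = (aA + B, eA; aC + D, eC)`, and `a ≥ 2` gives
  -- `aC + D > C` and `a (A - C) + (B - D) ≥ A - C`.
  simp only [ECFBound, Mmat, mul_apply, Fin.sum_univ_two, of_apply, cons_val', cons_val_zero,
    cons_val_one, empty_val', cons_val_fin_one, mul_zero, add_zero, mul_one, ← sub_mul, abs_mul,
    he, abs_of_nonneg hac, abs_of_pos hc]
  constructor <;> nlinarith

lemma ecfBound_prod_range {n : ℕ} (hn : 1 ≤ n) {a e : ℕ → ℤ} (ha : ∀ i < n, 2 ≤ a i)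
    (he : ∀ i < n, |e i| = 1) :
    ECFBound ((List.range n).map fun i => Mmat (a i) (e i)).prod := by
  induction n, hn using Nat.le_induction with
  | base => simpa using ecfBound_Mmat (ha 0 one_pos) (he 0 one_pos)
  | succ k hk ih =>
    rw [List.range_succ, List.map_append, List.prod_append]
    simpa using (ih (fun i hi => ha i (by omega)) (fun i hi => he i (by omega))).mul_Mmat
      (ha k k.lt_succ_self) (he k k.lt_succ_self)

def fixedPointQuad (m : Matrix (Fin 2) (Fin 2) ℤ) (x : ℝ) : ℝ :=
  m 1 0 * x ^ 2 + (m 1 1 - m 0 0) * x - m 0 1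

lemma moebius_eq_self_iff {m : Matrix (Fin 2) (Fin 2) ℤ} {x : ℝ}
    (hden : (m 1 0 : ℝ) * x + m 1 1 ≠ 0) : moebius m x = x ↔ fixedPointQuad m x = 0 := by
  rw [moebius, div_eq_iff hden, fixedPointQuad]
  constructor <;> intro h <;> linear_combination -h

lemma fixedPointQuad_antiTranspose_neg (m : Matrix (Fin 2) (Fin 2) ℤ) (x : ℝ) :
    fixedPointQuad (antiTranspose m) (-x) = fixedPointQuad m x := by
  simp [fixedPointQuad, antiTranspose]
  ring

lemma Irrational.intCast_mul_add_ne_zero {x : ℝ} (hx : Irrational x) {c : ℤ} (hc : c ≠ 0)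
    (d : ℤ) : (c : ℝ) * x + d ≠ 0 :=
  ((hx.intCast_mul hc).add_intCast d).ne_zero

lemma exists_conj_fixedPointQuad {m : Matrix (Fin 2) (Fin 2) ℤ} (hc : m 1 0 ≠ 0) {ω : ℝ}
    (hω : Irrational ω) (hq : fixedPointQuad m ω = 0) :
    ∃ ω' : ℝ, Irrational ω' ∧ ω' ≠ ω ∧
      ∀ x, fixedPointQuad m x = m 1 0 * (x - ω) * (x - ω') := by
  have hc' : (m 1 0 : ℝ) ≠ 0 := by exact_mod_cast hc
  set ω' : ℝ := (((m 0 0 - m 1 1 : ℤ) / m 1 0 : ℚ) : ℝ) - ω with hω'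
  have hsum : (m 1 0 : ℝ) * (ω + ω') = m 0 0 - m 1 1 := by
    rw [hω']
    push_cast
    field_simp
    ring
  refine ⟨ω', hω.ratCast_sub _, fun h => ?_, fun x => ?_⟩
  · refine (irrational_iff_ne_rational ω).1 hω (m 0 0 - m 1 1) (2 * m 1 0) (by simpa using hc) ?_
    rw [h] at hsum
    push_cast
    field_simp
    linarith
  · unfold fixedPointQuad at hq ⊢
    linear_combination hq + (x - ω) * hsum

lemma ECFBound.fixedPointQuad_one_nonpos {m : Matrix (Fin 2) (Fin 2) ℤ} (hm : ECFBound m) :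
    fixedPointQuad m 1 ≤ 0 := by
  obtain ⟨hbd, -⟩ := abs_le.1 hm.2
  have : m 1 0 + m 1 1 - m 0 0 - m 0 1 ≤ 0 := by linarith
  unfold fixedPointQuad
  push_cast [← Int.cast_le (R := ℝ)] at this
  linarith

lemma ECFBound.fixedPointQuad_neg_one_pos {m : Matrix (Fin 2) (Fin 2) ℤ} (hm : ECFBound m) :
    0 < fixedPointQuad m (-1) := by
  obtain ⟨-, hd⟩ := abs_lt.1 hm.1
  obtain ⟨-, hbd⟩ := abs_le.1 hm.2
  have : 0 < m 1 0 - m 1 1 + m 0 0 - m 0 1 := by linarith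
  unfold fixedPointQuad
  push_cast [← Int.cast_lt (R := ℝ)] at this
  linarith

lemma mem_Ioc_of_quadratic_sign {c ω ω' : ℝ} (hc : 0 < c) (hω : 1 < ω)
    (h₁ : c * (1 - ω) * (1 - ω') ≤ 0) (h₂ : 0 < c * (-1 - ω) * (-1 - ω')) :
    ω' ∈ Set.Ioc (-1) 1 := by
  have hc₁ : 0 < c * (ω - 1) := mul_pos hc (by linarith)
  have hc₂ : 0 < c * (ω + 1) := mul_pos hc (by linarith)
  constructor <;> nlinarith

theorem stmt7 (n : ℕ) (hn : 1 ≤ n) (a e : ℕ → ℤ)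
    (ha : ∀ i < n, 0 < a i ∧ Even (a i)) (he : ∀ i < n, e i = 1 ∨ e i = -1)
    (ω : ℝ) (hω : 1 < ω) (hirr : Irrational ω)
    (hfix : moebius (((List.range n).map (fun i => Mmat (a i) (e i))).prod) ω = ω) :
    ∃ ωs : ℝ, IsConjPair ω ωs ∧ -1 < ωs ∧ ωs < 1 ∧
      moebius (((List.range n).reverse.map (fun i => !![0, e i; 1, a i])).prod) (-ωs)
        = -ωs := by
  set σ := ((List.range n).map fun i => Mmat (a i) (e i)).prod
  have hσ : ECFBound σ := ecfBound_prod_range hn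
    (fun i hi => by obtain ⟨hpos, r, hr⟩ := ha i hi; omega)
    (fun i hi => by rcases he i hi with h | h <;> simp [h])
  have hc : 0 < σ 1 0 := (abs_nonneg _).trans_lt hσ.1
  have hq : fixedPointQuad σ ω = 0 :=
    (moebius_eq_self_iff (hirr.intCast_mul_add_ne_zero hc.ne' _)).1 hfix
  obtain ⟨ωs, hirr', hne, hfac⟩ := exists_conj_fixedPointQuad hc.ne' hirr hq
  obtain ⟨hlow, hup⟩ := mem_Ioc_of_quadratic_sign (by exact_mod_cast hc) hω
    (hfac 1 ▸ hσ.fixedPointQuad_one_nonpos) (hfac (-1) ▸ hσ.fixedPointQuad_neg_one_pos)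
  have hroot : ∀ x, fixedPointQuad σ x = 0 →
      (σ 1 0 : ℝ) * x ^ 2 + ((σ 1 1 - σ 0 0 : ℤ) : ℝ) * x + ((-σ 0 1 : ℤ) : ℝ) = 0 := by
    intro x hx
    unfold fixedPointQuad at hx
    push_cast
    linear_combination hx
  have hqs : fixedPointQuad σ ωs = 0 := by rw [hfac]; ring
  have hN : ((List.range n).reverse.map fun i => !![0, e i; 1, a i]).prod = antiTranspose σ := by
    rw [antiTranspose_list_prod, List.map_map, ← List.map_reverse]
    simp [Function.comp_def, antiTranspose_Mmat]
  refine ⟨ωs, isConjPair_of_roots hirr hne hc (hroot ω hq) (hroot ωs hqs), hlow,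
    lt_of_le_of_ne hup hirr'.ne_one, ?_⟩
  rw [hN, moebius_eq_self_iff (m := antiTranspose σ) (hirr'.neg.intCast_mul_add_ne_zero hc.ne' _),
    fixedPointQuad_antiTranspose_neg, hqs]
end
end

section
/- If ω is an E-reduced quadratic irrational of discriminant Δ, then T_E(ω) is again an E-reduced quadratic irrational of discriminant Δ; that is, T_E maps ℛ_E(Δ) into ℛ_E(Δ). -/
noncomputable section

/-- First ECF digit: `a₁(u) = 2⎣(u+1)/2⎦`. -/
def aE (u : ℝ) : ℤ := 2 * ⌊(u + 1) / 2⌋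

/-- Sign digit: `e₁(u) = sgn (u - a₁(u)) ∈ {±1}`. -/
def eE (u : ℝ) : ℤ := if (aE u : ℝ) < u then 1 else -1

/-- The ECF Gauss shift `T_E(u) = e₁(u) / (u - a₁(u))`. -/
def TE (u : ℝ) : ℝ := (eE u : ℝ) / (u - aE u)

/-!
Write `a = a₁(ω)` and `e = e₁(ω)`, so that `T_E(ω) = e / (ω - a)` with `|ω - a| < 1`, hence
`T_E(ω) > 1`. The substitution `x = a + e / y` carries a root `x` of `f = A X² + B X + C` to a
root `y` of `f(a) Y² + e f'(a) Y + A`. This unimodular change of variables preserves the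
discriminant and primitivity, and `f(a) ≠ 0` because the image root is irrational, so after
fixing the sign it is the minimal polynomial of `T_E(ω)`. The conjugate `ω' < 1` goes to
`e / (ω' - a)`, of absolute value `< 1` because `ω' - a < -1` when `a ≥ 2`.
-/

lemma aE_sub_one_lt {u : ℝ} (hu : Irrational u) : (aE u : ℝ) - 1 < u := by
  have hle : (aE u : ℝ) ≤ u + 1 := by
    have := Int.floor_le ((u + 1) / 2)
    unfold aE; push_cast; linarith
  have hne : u ≠ ((aE u - 1 : ℤ) : ℝ) := hu.ne_int _
  push_cast at hne
  exact lt_of_le_of_ne (by linarith) hne.symm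

lemma lt_aE_add_one (u : ℝ) : u < (aE u : ℝ) + 1 := by
  have := Int.lt_floor_add_one ((u + 1) / 2)
  unfold aE; push_cast; linarith

lemma two_le_aE {u : ℝ} (hu : 1 < u) : (2 : ℝ) ≤ aE u := by
  have : (1 : ℤ) ≤ ⌊(u + 1) / 2⌋ := by
    rw [Int.le_floor]; push_cast; linarith
  have h2 : (2 : ℤ) ≤ aE u := by unfold aE; omega
  exact_mod_cast h2

lemma abs_sub_aE_lt_one {u : ℝ} (hu : Irrational u) : |u - aE u| < 1 :=
  abs_sub_lt_iff.2 ⟨by linarith [lt_aE_add_one u], by linarith [aE_sub_one_lt hu]⟩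

lemma eE_eq_one_or_neg_one (u : ℝ) : eE u = 1 ∨ eE u = -1 := by
  unfold eE; split <;> simp

lemma eE_ne_zero (u : ℝ) : (eE u : ℝ) ≠ 0 := by
  rcases eE_eq_one_or_neg_one u with h | h <;> simp [h]

lemma eE_mul_self (u : ℝ) : eE u * eE u = 1 := by
  rcases eE_eq_one_or_neg_one u with h | h <;> rw [h] <;> rfl

lemma abs_eE (u : ℝ) : |(eE u : ℝ)| = 1 := by
  rcases eE_eq_one_or_neg_one u with h | h <;> simp [h]

lemma TE_eq_inv_abs {u : ℝ} (hu : u ≠ aE u) : TE u = |u - aE u|⁻¹ := by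
  unfold TE eE
  split_ifs with h
  · rw [abs_of_pos (sub_pos.2 h)]; simp
  · rw [abs_of_neg (sub_neg.2 (lt_of_le_of_ne (not_lt.1 h) hu)), inv_neg, Int.cast_neg,
      Int.cast_one, neg_div, one_div]

lemma one_lt_TE {u : ℝ} (hu : Irrational u) : 1 < TE u := by
  have hpos : 0 < |u - aE u| := abs_pos.2 (sub_ne_zero.2 (hu.ne_int _))
  rw [TE_eq_inv_abs (hu.ne_int _)]
  exact one_lt_inv₀ hpos |>.2 (abs_sub_aE_lt_one hu)

lemma irrational_TE {u : ℝ} (hu : Irrational u) : Irrational (TE u) :=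
  (hu.sub_intCast _).intCast_div (by exact_mod_cast eE_ne_zero u)

lemma abs_eE_div_lt_one (u : ℝ) {x : ℝ} (hx : 1 < |x - aE u|) :
    |(eE u : ℝ) / (x - aE u)| < 1 := by
  rw [abs_div, abs_eE]
  exact (div_lt_one (by linarith)).2 hx

lemma gcd_gcd_eq_one_of_dvd {A B C A' B' C' : ℤ} (h : Int.gcd (Int.gcd A B : ℤ) C = 1)
    (hdvd : ∀ d : ℤ, d ∣ A' → d ∣ B' → d ∣ C' → d ∣ A ∧ d ∣ B ∧ d ∣ C) :
    Int.gcd (Int.gcd A' B' : ℤ) C' = 1 := by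
  set g := Int.gcd (Int.gcd A' B' : ℤ) C'
  obtain ⟨hA, hB, hC⟩ := hdvd g ((Int.gcd_dvd_left _ _).trans (Int.gcd_dvd_left _ _))
    ((Int.gcd_dvd_left _ _).trans (Int.gcd_dvd_right _ _)) (Int.gcd_dvd_right _ _)
  have := Int.dvd_coe_gcd (Int.dvd_coe_gcd hA hB) hC
  rw [h] at this
  exact_mod_cast Int.eq_one_of_dvd_one (by positivity) this

lemma exists_pos_primitive_of_ne_zero {A B C : ℤ} (hA : A ≠ 0)
    (hgcd : Int.gcd (Int.gcd A B : ℤ) C = 1) :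
    ∃ A' B' C' : ℤ, 0 < A' ∧ Int.gcd (Int.gcd A' B' : ℤ) C' = 1 ∧
      B' ^ 2 - 4 * A' * C' = B ^ 2 - 4 * A * C ∧
      ∀ x : ℝ, (A' : ℝ) * x ^ 2 + B' * x + C' = 0 ↔ (A : ℝ) * x ^ 2 + B * x + C = 0 := by
  rcases hA.lt_or_gt with hneg | hpos
  · refine ⟨-A, -B, -C, by omega, ?_, by ring, fun x => ?_⟩
    · exact gcd_gcd_eq_one_of_dvd hgcd fun d hA hB hC =>
        ⟨(dvd_neg).1 hA, (dvd_neg).1 hB, (dvd_neg).1 hC⟩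
    · push_cast
      constructor <;> intro h <;> linarith
  · exact ⟨A, B, C, hpos, hgcd, rfl, fun _ => Iff.rfl⟩

section Substitution

variable {A B C : ℤ} {e : ℤ} (a : ℤ)

lemma gcd_substitute_eq_one (he : e * e = 1) (hgcd : Int.gcd (Int.gcd A B : ℤ) C = 1) :
    Int.gcd (Int.gcd (A * a ^ 2 + B * a + C) (e * (2 * A * a + B)) : ℤ) A = 1 := by
  refine gcd_gcd_eq_one_of_dvd hgcd fun d hfa hlin hA => ?_
  have hB : d ∣ B := by
    have := (hlin.mul_left e).sub (hA.mul_left (2 * a))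
    rwa [show e * (e * (2 * A * a + B)) - 2 * a * A = B by
      linear_combination (2 * A * a + B) * he] at this
  have hC := (hfa.sub (hA.mul_left (a ^ 2))).sub (hB.mul_left a)
  rw [show A * a ^ 2 + B * a + C - a ^ 2 * A - a * B = C by ring] at hC
  exact ⟨hA, hB, hC⟩

/-- The coefficients are those of `y² · f(a + e / y)`, using `e² = 1`. -/
lemma substitute_root (he : e * e = 1) {x : ℝ} (hx : x ≠ a)
    (hroot : (A : ℝ) * x ^ 2 + B * x + C = 0) :
    ((A * a ^ 2 + B * a + C : ℤ) : ℝ) * ((e : ℝ) / (x - a)) ^ 2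
      + ((e * (2 * A * a + B) : ℤ) : ℝ) * ((e : ℝ) / (x - a)) + A = 0 := by
  have hd : x - (a : ℝ) ≠ 0 := sub_ne_zero.2 hx
  have heR : (e : ℝ) * e = 1 := by exact_mod_cast he
  calc _ = ((A : ℝ) * x ^ 2 + B * x + C) * (e * e) / (x - a) ^ 2 + (1 - e * e) * A := by
          push_cast; field_simp; ring
    _ = 0 := by rw [hroot, heR]; ring

lemma exists_primitive_of_substitute_root (he : e * e = 1) (hA : A ≠ 0)
    (hgcd : Int.gcd (Int.gcd A B : ℤ) C = 1) {y : ℝ} (hy : Irrational y)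
    (hroot : ((A * a ^ 2 + B * a + C : ℤ) : ℝ) * y ^ 2 + ((e * (2 * A * a + B) : ℤ) : ℝ) * y
      + A = 0) :
    ∃ A' B' C' : ℤ, 0 < A' ∧ Int.gcd (Int.gcd A' B' : ℤ) C' = 1 ∧
      B' ^ 2 - 4 * A' * C' = B ^ 2 - 4 * A * C ∧
      ∀ z : ℝ, (A' : ℝ) * z ^ 2 + B' * z + C' = 0 ↔
        ((A * a ^ 2 + B * a + C : ℤ) : ℝ) * z ^ 2 + ((e * (2 * A * a + B) : ℤ) : ℝ) * z
          + A = 0 := by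
  -- otherwise `y` solves a linear equation over `ℤ` with constant term `A ≠ 0`, so is rational
  have hfa : A * a ^ 2 + B * a + C ≠ 0 := by
    intro h0
    rw [h0, Int.cast_zero, zero_mul, zero_add] at hroot
    have hlin : ((e * (2 * A * a + B) : ℤ) : ℝ) ≠ 0 := by
      rintro h; rw [h, zero_mul, zero_add] at hroot; exact hA (by exact_mod_cast hroot)
    refine hy ⟨-(A : ℚ) / (e * (2 * A * a + B) : ℤ), ?_⟩
    push_cast at hlin hroot ⊢
    rw [div_eq_iff hlin]
    linear_combination -hroot
  obtain ⟨A', B', C', hA', hgcd', hdisc, hiff⟩ :=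
    exists_pos_primitive_of_ne_zero hfa (gcd_substitute_eq_one a he hgcd)
  refine ⟨A', B', C', hA', hgcd', ?_, hiff⟩
  rw [hdisc]
  linear_combination (2 * A * a + B) ^ 2 * he

end Substitution

theorem stmt9 (Δ : ℤ) (ω : ℝ) (hω : 1 < ω) (hdisc : HasDisc ω Δ)
    (hred : ∃ ω' : ℝ, IsConjPair ω ω' ∧ -1 < ω' ∧ ω' < 1) :
    1 < TE ω ∧ HasDisc (TE ω) Δ ∧
      ∃ ω' : ℝ, IsConjPair (TE ω) ω' ∧ -1 < ω' ∧ ω' < 1 := by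
  obtain ⟨hirr, A, B, C, hA, hgcd, hroot, rfl⟩ := hdisc
  obtain ⟨ω', ⟨-, A₂, B₂, C₂, hA₂, hgcd₂, hroot₂, hroot', hne⟩, -, hhi⟩ := hred
  have ha := two_le_aE hω
  have hωa : ω ≠ aE ω := hirr.ne_int _
  have hω'a : ω' - aE ω < -1 := by linarith
  have hTne : eE ω / (ω' - aE ω) ≠ TE ω := fun h =>
    hne (sub_left_injective (inv_injective (mul_left_cancel₀ (eE_ne_zero ω) h)))
  have hTirr := irrational_TE hirr
  have hT := substitute_root _ (eE_mul_self ω) hωa hroot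
  have hT₂ := substitute_root _ (eE_mul_self ω) hωa hroot₂
  have hT' := substitute_root _ (eE_mul_self ω) (by linarith : ω' < aE ω).ne hroot'
  obtain ⟨A', B', C', hA', hgcd', hdisc', hiff⟩ :=
    exists_primitive_of_substitute_root _ (eE_mul_self ω) hA.ne' hgcd hTirr hT
  obtain ⟨A₂', B₂', C₂', hA₂', hgcd₂', -, hiff₂⟩ :=
    exists_primitive_of_substitute_root _ (eE_mul_self ω) hA₂.ne' hgcd₂ hTirr hT₂
  have hconj : |eE ω / (ω' - aE ω)| < 1 :=
    abs_eE_div_lt_one ω (by rw [abs_of_neg (by linarith)]; linarith)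
  refine ⟨one_lt_TE hirr, ⟨hTirr, A', B', C', hA', hgcd', (hiff _).2 hT, hdisc'.symm⟩,
    eE ω / (ω' - aE ω), ⟨hTirr, A₂', B₂', C₂', hA₂', hgcd₂', (hiff₂ _).2 hT₂,
      (hiff₂ _).2 hT', hTne⟩, abs_lt.1 hconj⟩
end
end

section
/- Let M(a,e) denote the matrix (a,e;1,0). A matrix σ ∈ GL(2,ℤ) can be written as σ = M(a₁,e₁)···M(aₙ,eₙ) for some n ≥ 2, positive even integers a₁,…,aₙ, and signs e₁,…,eₙ ∈ {±1}, if and only if σ has the form σ = (p′, p·e; q′, q·e) for some e ∈ {±1} and integers p′, p, q′, q satisfying p′ > p > q > 0 and p′ > q′ > q, and σ ≡ I₂ (mod 2) or σ ≡ J₂ (mod 2), where J₂ = (0,1;1,0). -/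
/-!
Modulo 2 every `M(a, e)` with `a` even is `J₂`, so a product of `n` of them is `J₂ ^ n ∈ {I₂, J₂}`.
Right multiplication by `M(a, e)` sends the columns `(v, ε w)` of `σ` to `(a v + ε w, e v)`; for
`a ≥ 2` this preserves `p' - q' ≥ p - q > 0` and `q' > q ≥ 0` while pushing the lower right entry
`q` up, which gives the shape of the products.

Conversely, peel factors off on the left by the Euclidean algorithm with even quotients: write
`p = 2 t q + e r` with `0 < r < q` (possible because the determinant `±1` prevents `q ∣ p` once
`q > 1`) and `σ = M(2 t, e) (q', q ε; s, r ε)`. The new matrix again has determinant `±1`, its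
entries satisfy `r < s` by the determinant bound and `r ≢ s (mod 2)`, so the descent in `q`
terminates at `q = 1`, where `σ = M(p, p' - p q') M(q', ε)`.
-/

noncomputable section

local notation "J₂" => (!![0, 1; 1, 0] : Matrix (Fin 2) (Fin 2) (ZMod 2))

theorem pow_eq_one_or_eq_self_of_sq_eq_one {M : Type*} [Monoid M] {x : M} (hx : x ^ 2 = 1)
    (n : ℕ) : x ^ n = 1 ∨ x ^ n = x := by
  rw [pow_eq_pow_mod n hx]
  rcases Nat.mod_two_eq_zero_or_one n with h | h <;> simp [h]

theorem Matrix.map_fin_two {α β : Type*} (f : α → β) (a b c d : α) :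
    !![a, b; c, d].map f = !![f a, f b; f c, f d] := by
  ext i j; fin_cases i <;> fin_cases j <;> rfl

theorem map_intCast_mul_eq_one_or_J₂_iff {w x y z ε : ℤ} (hε : Odd ε) :
    ((!![w, x * ε; y, z * ε].map (Int.cast : ℤ → ZMod 2) = 1 ∨
        !![w, x * ε; y, z * ε].map (Int.cast : ℤ → ZMod 2) = J₂) ↔
      Odd (w + x) ∧ Odd (w + y) ∧ Odd (y + z)) := by
  simp only [Matrix.map_fin_two, ← ZMod.intCast_eq_one_iff_odd, Int.cast_add, Int.cast_mul,
    ZMod.intCast_eq_one_iff_odd.mpr hε, mul_one]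
  generalize (w : ZMod 2) = W, (x : ZMod 2) = X, (y : ZMod 2) = Y, (z : ZMod 2) = Z
  revert W X Y Z
  decide

theorem Mmat_map_intCast {a e : ℤ} (ha : Even a) (he : Odd e) :
    (Mmat a e).map (Int.cast : ℤ → ZMod 2) = J₂ := by
  simp [Mmat, Matrix.map_fin_two, ZMod.intCast_eq_zero_iff_even.mpr ha,
    ZMod.intCast_eq_one_iff_odd.mpr he]

def IsEvenMmatProduct (n : ℕ) (σ : Matrix (Fin 2) (Fin 2) ℤ) : Prop :=
  ∃ a e : ℕ → ℤ, (∀ i < n, 0 < a i ∧ Even (a i)) ∧ (∀ i < n, e i = 1 ∨ e i = -1) ∧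
    σ = ((List.range n).map (fun i => Mmat (a i) (e i))).prod

namespace IsEvenMmatProduct

variable {n : ℕ} {σ : Matrix (Fin 2) (Fin 2) ℤ}

theorem zero : IsEvenMmatProduct 0 1 :=
  ⟨0, 0, by simp, by simp, by simp⟩

theorem Mmat_mul (h : IsEvenMmatProduct n σ) {a e : ℤ} (ha : 0 < a) (ha2 : Even a)
    (he : e = 1 ∨ e = -1) : IsEvenMmatProduct (n + 1) (Mmat a e * σ) := by
  obtain ⟨as, es, has, hes, rfl⟩ := h
  refine ⟨fun i => Nat.casesOn i a as, fun i => Nat.casesOn i e es, ?_, ?_, ?_⟩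
  · rintro (_ | i) hi
    exacts [⟨ha, ha2⟩, has i (by omega)]
  · rintro (_ | i) hi
    exacts [he, hes i (by omega)]
  · rw [List.prod_range_succ']
    rfl

theorem map_intCast (h : IsEvenMmatProduct n σ) : σ.map (Int.cast : ℤ → ZMod 2) = J₂ ^ n := by
  obtain ⟨a, e, ha, he, rfl⟩ := h
  have hmap (l : List (Matrix (Fin 2) (Fin 2) ℤ)) :
      l.prod.map (Int.cast : ℤ → ZMod 2) = (l.map (·.map Int.cast)).prod :=
    map_list_prod (Int.castRingHom (ZMod 2)).mapMatrix l
  rw [hmap, List.map_map, ← List.prod_replicate]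
  refine congrArg _ (List.eq_replicate_iff.mpr ⟨by simp, fun M hM => ?_⟩)
  obtain ⟨i, hi, rfl⟩ := List.mem_map.mp hM
  rw [List.mem_range] at hi
  exact Mmat_map_intCast (ha i hi).2 (by rcases he i hi with h | h <;> simp [h])

end IsEvenMmatProduct

/-- The shape of `M(a₁, e₁) ⋯ M(aₙ, eₙ)`, with `c` a lower bound for the entry `q`, which grows
with `n`. -/
def IsPositiveForm (c : ℤ) (σ : Matrix (Fin 2) (Fin 2) ℤ) : Prop :=
  ∃ p' p q' q ε : ℤ, (ε = 1 ∨ ε = -1) ∧ σ = !![p', p * ε; q', q * ε] ∧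
    c ≤ q ∧ q < q' ∧ q < p ∧ p - q ≤ p' - q'

theorem isPositiveForm_Mmat {a e : ℤ} (ha : 2 ≤ a) (he : e = 1 ∨ e = -1) :
    IsPositiveForm 0 (Mmat a e) :=
  ⟨a, 1, 1, 0, e, he, by simp [Mmat], le_rfl, one_pos, one_pos, by linarith⟩

theorem IsPositiveForm.mul_Mmat {c : ℤ} {σ : Matrix (Fin 2) (Fin 2) ℤ} (h : IsPositiveForm c σ)
    (hc : 0 ≤ c) {a e : ℤ} (ha : 2 ≤ a) (he : e = 1 ∨ e = -1) :
    IsPositiveForm (c + 1) (σ * Mmat a e) := by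
  obtain ⟨p', p, q', q, ε, hε, rfl, hcq, hqq', hqp, hpq⟩ := h
  refine ⟨a * p' + p * ε, p', a * q' + q * ε, q', e, he, ?_, by linarith, ?_, by linarith, ?_⟩
  · ext i j
    fin_cases i <;> fin_cases j <;> simp [Mmat] <;> ring
  all_goals rcases hε with rfl | rfl <;> nlinarith

theorem IsEvenMmatProduct.isPositiveForm {n : ℕ} {σ : Matrix (Fin 2) (Fin 2) ℤ}
    (h : IsEvenMmatProduct n σ) (hn : 1 ≤ n) : IsPositiveForm (n - 1) σ := by
  obtain ⟨a, e, ha, he, rfl⟩ := h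
  have ha2 (i : ℕ) (hi : i < n) : 2 ≤ a i := by
    obtain ⟨hpos, k, hk⟩ := ha i hi
    omega
  clear ha
  induction n, hn using Nat.le_induction with
  | base => simpa using isPositiveForm_Mmat (ha2 0 one_pos) (he 0 one_pos)
  | succ n hn ih =>
    rw [List.prod_range_succ, show ((n + 1 : ℕ) : ℤ) - 1 = n - 1 + 1 by push_cast; ring]
    exact (ih (fun i hi => he i (by omega)) (fun i hi => ha2 i (by omega))).mul_Mmat (by omega)
      (ha2 n (by omega)) (he n (by omega))

theorem exists_eq_two_mul_mul_add_mul_of_not_dvd {p q : ℤ} (hq : 0 < q) (h : ¬ q ∣ p) :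
    ∃ t e r : ℤ, (e = 1 ∨ e = -1) ∧ 0 < r ∧ r < q ∧ p = 2 * t * q + e * r := by
  have hdiv := Int.mul_ediv_add_emod (p + q) (2 * q)
  have hm0 := Int.emod_nonneg (p + q) (by omega : 2 * q ≠ 0)
  have hm1 := Int.emod_lt_of_pos (p + q) (by omega : 0 < 2 * q)
  set t := (p + q) / (2 * q)
  set m := (p + q) % (2 * q)
  have hm_ne_zero : m ≠ 0 := fun hm => h ⟨2 * t - 1, by linarith⟩
  have hm_ne_q : m ≠ q := fun hm => h ⟨2 * t, by linarith⟩
  rcases hm_ne_q.lt_or_gt with hlt | hgt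
  · exact ⟨t, -1, q - m, by simp, by omega, by omega, by linarith⟩
  · exact ⟨t, 1, m - q, by simp, by omega, by omega, by linarith⟩

theorem exists_Mmat_mul_eq {p' p q' q : ℤ} (hq : 1 < q) (hqp : q < p) (hqq' : q < q')
    (hdet : |p' * q - p * q'| = 1) (hp'p : Odd (p' + p)) (hp'q' : Odd (p' + q')) :
    ∃ t e s r : ℤ, 0 < t ∧ (e = 1 ∨ e = -1) ∧
      (∀ ε, !![p', p * ε; q', q * ε] = Mmat (2 * t) e * !![q', q * ε; s, r * ε]) ∧
      0 < r ∧ r < q ∧ r < s ∧ |q' * r - q * s| = 1 ∧ Odd (q' + s) ∧ Odd (s + r) := by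
  have hndvd : ¬ q ∣ p := fun hdvd => by
    have : q ∣ 1 := hdet ▸ (dvd_abs q _).mpr (dvd_sub (dvd_mul_left q p') (hdvd.mul_right q'))
    have := Int.le_of_dvd one_pos this
    omega
  obtain ⟨t, e, r, he, hr, hrq, rfl⟩ :=
    exists_eq_two_mul_mul_add_mul_of_not_dvd (by omega) hndvd
  have he2 : e * e = 1 := by rcases he with rfl | rfl <;> norm_num
  have he1 : Even (e - 1) := by rcases he with rfl | rfl <;> decide
  obtain ⟨s, rfl⟩ : ∃ s, p' = 2 * t * q' + e * s :=
    ⟨e * (p' - 2 * t * q'), by linear_combination (2 * t * q' - p') * he2⟩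
  have hd : |s * q - r * q'| = 1 := by
    rw [← hdet, show (2 * t * q' + e * s) * q - (2 * t * q + e * r) * q' = e * (s * q - r * q')
      by ring, abs_mul, (abs_eq zero_le_one).mpr he, one_mul]
  obtain ⟨hd1, hd2⟩ := abs_le.mp hd.le
  have hsr : Odd (s + r) := by
    rw [show s + r = 2 * t * q' + e * s + (2 * t * q + e * r) -
      (2 * (t * q' + t * q) + (e - 1) * (s + r)) by ring]
    exact hp'p.sub_even ((even_two_mul _).add (he1.mul_right _))
  have her : e * r ≤ r := by rcases he with rfl | rfl <;> linarith
  refine ⟨t, e, s, r, by nlinarith, he, fun ε => ?_, hr, hrq, ?_, ?_, ?_, hsr⟩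
  · ext i j
    fin_cases i <;> fin_cases j <;> simp [Mmat]
    ring
  · -- `s q = r q' ± 1 ≥ r (q + 1) - 1`, and `s ≠ r` by parity
    have hrs : r ≤ s := by nlinarith
    rcases hrs.lt_or_eq with h | rfl
    · exact h
    · exact absurd hsr (by simp [← two_mul])
  · rw [← abs_neg, ← hd]; ring_nf
  · rw [show q' + s = 2 * t * q' + e * s + q' - (2 * t * q' + (e - 1) * s) by ring]
    exact hp'q'.sub_even (((even_two_mul t).mul_right q').add (he1.mul_right s))

theorem isEvenMmatProduct_of_abs_det_eq_one {p' p q' q : ℤ} (ε : ℤ) (hε : ε = 1 ∨ ε = -1)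
    (hq : 0 < q) (hqp : q < p) (hqq' : q < q') (hdet : |p' * q - p * q'| = 1)
    (hp'p : Odd (p' + p)) (hp'q' : Odd (p' + q')) (hq'q : Odd (q' + q)) :
    ∃ n ≥ 2, IsEvenMmatProduct n !![p', p * ε; q', q * ε] := by
  rcases (show q = 1 ∨ 1 < q by omega) with rfl | hq1
  · have hq' : Even q' := by
      rw [Int.odd_iff] at hq'q
      rw [Int.even_iff]
      omega
    have hp : Even p := by
      rw [Int.odd_iff] at hp'p hp'q'
      rw [Int.even_iff] at hq' ⊢
      omega
    refine ⟨2, le_rfl, ?_⟩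
    convert (IsEvenMmatProduct.zero.Mmat_mul (by omega) hq' hε).Mmat_mul (by omega) hp
      ((abs_eq zero_le_one).mp hdet) using 1
    ext i j
    fin_cases i <;> fin_cases j <;> simp [Mmat]
  · obtain ⟨t, e, s, r, ht, he, hσ, hr, hrq, hrs, hdet', hq's, hsr⟩ :=
      exists_Mmat_mul_eq hq1 hqp hqq' hdet hp'p hp'q'
    obtain ⟨n, hn, hprod⟩ :=
      isEvenMmatProduct_of_abs_det_eq_one ε hε hr hrq hrs hdet' hq'q hq's hsr
    refine ⟨n + 1, by omega, ?_⟩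
    rw [hσ]
    exact hprod.Mmat_mul (by omega) (even_two_mul t) he
termination_by q.toNat
decreasing_by omega

theorem stmt12 (σ : Matrix (Fin 2) (Fin 2) ℤ) (hdet : σ.det = 1 ∨ σ.det = -1) :
    (∃ n ≥ 2, ∃ a e : ℕ → ℤ, (∀ i < n, 0 < a i ∧ Even (a i)) ∧
        (∀ i < n, e i = 1 ∨ e i = -1) ∧
        σ = ((List.range n).map (fun i => Mmat (a i) (e i))).prod) ↔
    (∃ p' p q' q ee : ℤ, (ee = 1 ∨ ee = -1) ∧ σ = !![p', p * ee; q', q * ee] ∧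
        p < p' ∧ q < p ∧ 0 < q ∧ q' < p' ∧ q < q' ∧
        (σ.map (Int.cast : ℤ → ZMod 2) = 1 ∨
          σ.map (Int.cast : ℤ → ZMod 2) = !![0, 1; 1, 0])) := by
  constructor
  · rintro ⟨n, hn, (hσ : IsEvenMmatProduct n σ)⟩
    obtain ⟨p', p, q', q, ε, hε, hσ_eq, hnq, hqq', hqp, hpq⟩ := hσ.isPositiveForm (by omega)
    refine ⟨p', p, q', q, ε, hε, hσ_eq, by linarith, hqp, by omega, by linarith, hqq', ?_⟩
    rw [hσ.map_intCast]
    exact pow_eq_one_or_eq_self_of_sq_eq_one (by decide) n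
  · rintro ⟨p', p, q', q, ε, hε, rfl, -, hqp, hq, -, hqq', hmod⟩
    have hdet' : |p' * q - p * q'| = 1 := by
      rw [Matrix.det_fin_two_of, ← abs_eq zero_le_one,
        show p' * (q * ε) - p * ε * q' = ε * (p' * q - p * q') by ring, abs_mul,
        (abs_eq zero_le_one).mpr hε, one_mul] at hdet
      exact hdet
    obtain ⟨hp'p, hp'q', hq'q⟩ :=
      (map_intCast_mul_eq_one_or_J₂_iff (by rcases hε with rfl | rfl <;> decide)).mp hmod
    exact isEvenMmatProduct_of_abs_det_eq_one ε hε hq hqp hqq' hdet' hp'p hp'q' hq'q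
end
end

section
/- Let Δ ≡ 1 (mod 4) and let ω be an E-reduced quadratic irrational of discriminant Δ. Then every σ ∈ Θ̃ with σ·ω = ω satisfies σ ≡ I₂ (mod 2), and the image of the stabilizer Θ̃_ω under the map (a,b;c,d) ↦ cω+d equals ℱ_Δ = {t + u√Δ : t, u ∈ ℤ, t² − Δu² = ±1}; that is, {cω+d : (a,b;c,d) ∈ Θ̃, σ·ω = ω} = ℱ_Δ. -/
noncomputable section

/-- Membership in the Theta group `Θ̃`: an integer matrix with determinant `±1`
which is congruent to `I₂` or to `J₂ = (0,1;1,0)` mod 2. -/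
def IsTheta (m : Matrix (Fin 2) (Fin 2) ℤ) : Prop :=
  (m.det = 1 ∨ m.det = -1) ∧
  (m.map (Int.cast : ℤ → ZMod 2) = 1 ∨ m.map (Int.cast : ℤ → ZMod 2) = !![0, 1; 1, 0])

/-! Let `Aω² + Bω + C = 0` be the primitive relation of `ω` and `s = 2Aω + B`, so `s² = Δ`.
If `σ = (a, b; c, d)` fixes `ω`, then `cω² + (d - a)ω - b = 0` is an integer multiple `w` of
that relation. In `Θ̃` we have `a ≡ d (mod 2)`, and `Δ ≡ 1 (mod 4)` makes `B` odd, so `w = 2u`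
is even: `σ` is the matrix of multiplication by `t + us` on the basis `(ω, 1)`, with `cω + d =
t + us` and `det σ = t² - Δu²`, and its off-diagonal entries are even. Conversely every such
matrix with `t² - Δu² = ±1` lies in `Θ̃` and fixes `ω`. Finally `s = ±√Δ`, and the set of
`t + us` with `t² - Δu² = ±1` does not change when `s` is replaced by `-s`. -/

theorem Irrational.eq_zero_of_intCast_mul_add_intCast_eq_zero {ω : ℝ} (hω : Irrational ω)
    {m n : ℤ} (h : (m : ℝ) * ω + n = 0) : m = 0 ∧ n = 0 := by
  by_cases hm : m = 0
  · subst hm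
    simpa using h
  · exact absurd h ((hω.intCast_mul hm).add_intCast n).ne_zero

theorem exists_eq_mul_of_quadratic_eq_zero {ω : ℝ} (hω : Irrational ω) {A B C p q r : ℤ}
    (hA : A ≠ 0) (hgcd : Int.gcd (Int.gcd A B : ℤ) C = 1)
    (hABC : (A : ℝ) * ω ^ 2 + B * ω + C = 0) (hpqr : (p : ℝ) * ω ^ 2 + q * ω + r = 0) :
    ∃ u : ℤ, p = u * A ∧ q = u * B ∧ r = u * C := by
  have hlin : ((A * q - p * B : ℤ) : ℝ) * ω + ((A * r - p * C : ℤ) : ℝ) = 0 := by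
    push_cast
    linear_combination (A : ℝ) * hpqr - (p : ℝ) * hABC
  obtain ⟨hq, hr⟩ := hω.eq_zero_of_intCast_mul_add_intCast_eq_zero hlin
  obtain ⟨X, Y, hXY⟩ := Int.isCoprime_iff_gcd_eq_one.mpr hgcd
  rw [Int.gcd_eq_gcd_ab] at hXY
  set u := X * (p * Int.gcdA A B + q * Int.gcdB A B) + Y * r
  have hp : p = u * A := by linear_combination -p * hXY - X * Int.gcdB A B * hq - Y * hr
  refine ⟨u, hp, mul_left_cancel₀ hA ?_, mul_left_cancel₀ hA ?_⟩
  · linear_combination hq + B * hp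
  · linear_combination hr + C * hp

theorem IsTheta.even_sub {σ : Matrix (Fin 2) (Fin 2) ℤ} (h : IsTheta σ) :
    Even (σ 1 1 - σ 0 0) := by
  have hdiag : ((σ 1 1 : ℤ) : ZMod 2) = σ 0 0 := by
    rcases h.2 with h | h <;>
    · have h00 := congrFun (congrFun h 0) 0
      have h11 := congrFun (congrFun h 1) 1
      simp only [Matrix.map_apply] at h00 h11
      rw [h00, h11]
      rfl
  rw [← ZMod.intCast_eq_zero_iff_even, Int.cast_sub, hdiag, sub_self]

theorem quadratic_eq_zero_of_moebius_eq_self {σ : Matrix (Fin 2) (Fin 2) ℤ} {ω : ℝ} (hω : ω ≠ 0)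
    (h : moebius σ ω = ω) :
    (σ 1 0 : ℝ) * ω ^ 2 + ((σ 1 1 - σ 0 0 : ℤ) : ℝ) * ω + ((-σ 0 1 : ℤ) : ℝ) = 0 := by
  have hden : (σ 1 0 : ℝ) * ω + σ 1 1 ≠ 0 := by
    intro h0
    rw [moebius, h0, div_zero] at h
    exact hω h.symm
  rw [moebius, div_eq_iff hden] at h
  push_cast
  linear_combination -h

/-- With `A ω² + B ω + C = 0` and `s = 2Aω + B`, this is the matrix of multiplication by
`t + u s` on the basis `(ω, 1)` of `ℤ ω + ℤ`. -/
def stabMatrix (A B C t u : ℤ) : Matrix (Fin 2) (Fin 2) ℤ :=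
  !![t - u * B, -(2 * u * C); 2 * u * A, t + u * B]

section stabMatrix

variable {A B C : ℤ}

theorem stabMatrix_det (t u : ℤ) :
    (stabMatrix A B C t u).det = t ^ 2 - (B ^ 2 - 4 * A * C) * u ^ 2 := by
  rw [stabMatrix, Matrix.det_fin_two_of]
  ring

theorem stabMatrix_map_zmod_two {t u : ℤ}
    (h : (stabMatrix A B C t u).det = 1 ∨ (stabMatrix A B C t u).det = -1) :
    (stabMatrix A B C t u).map (Int.cast : ℤ → ZMod 2) = 1 := by
  have hodd : Odd (stabMatrix A B C t u).det := h.elim (· ▸ odd_one) (· ▸ odd_neg_one)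
  rw [stabMatrix, Matrix.det_fin_two_of] at hodd
  have hdiag : Odd ((t - u * B) * (t + u * B)) := by
    have : Even (-(2 * u * C) * (2 * u * A)) := ⟨-(u * C) * (2 * u * A), by ring⟩
    simpa using hodd.add_even this
  obtain ⟨h00, h11⟩ := Int.odd_mul.mp hdiag
  ext i j
  fin_cases i <;> fin_cases j <;> simp [stabMatrix, h00.intCast_zmod_two, h11.intCast_zmod_two,
    show (2 : ZMod 2) = 0 from rfl]

theorem isTheta_stabMatrix_iff {t u : ℤ} :
    IsTheta (stabMatrix A B C t u) ↔
      t ^ 2 - (B ^ 2 - 4 * A * C) * u ^ 2 = 1 ∨ t ^ 2 - (B ^ 2 - 4 * A * C) * u ^ 2 = -1 := by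
  rw [IsTheta, ← stabMatrix_det]
  exact ⟨And.left, fun h => ⟨h, Or.inl (stabMatrix_map_zmod_two h)⟩⟩

theorem stabMatrix_lowerRow (ω : ℝ) (t u : ℤ) :
    (stabMatrix A B C t u 1 0 : ℝ) * ω + stabMatrix A B C t u 1 1 = t + u * (2 * A * ω + B) := by
  simp only [stabMatrix, Matrix.of_apply, Matrix.cons_val', Matrix.cons_val_one,
    Matrix.cons_val_zero, Matrix.empty_val', Matrix.cons_val_fin_one]
  push_cast
  ring

theorem moebius_stabMatrix {ω : ℝ} (hω : (A : ℝ) * ω ^ 2 + B * ω + C = 0) {t u : ℤ}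
    (hne : (t : ℝ) + u * (2 * A * ω + B) ≠ 0) : moebius (stabMatrix A B C t u) ω = ω := by
  rw [moebius, div_eq_iff (stabMatrix_lowerRow ω t u ▸ hne)]
  simp only [stabMatrix, Matrix.of_apply, Matrix.cons_val', Matrix.cons_val_one,
    Matrix.cons_val_zero, Matrix.empty_val', Matrix.cons_val_fin_one]
  push_cast
  linear_combination (-2 * u : ℝ) * hω

end stabMatrix

theorem exists_eq_stabMatrix_of_moebius_eq_self {ω : ℝ} (hω : Irrational ω) {A B C : ℤ}
    (hA : A ≠ 0) (hgcd : Int.gcd (Int.gcd A B : ℤ) C = 1)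
    (hABC : (A : ℝ) * ω ^ 2 + B * ω + C = 0) (hB : Odd B) {σ : Matrix (Fin 2) (Fin 2) ℤ}
    (hσ : Even (σ 1 1 - σ 0 0)) (hfix : moebius σ ω = ω) :
    ∃ t u : ℤ, σ = stabMatrix A B C t u := by
  obtain ⟨w, hc, hda, hb⟩ := exists_eq_mul_of_quadratic_eq_zero hω hA hgcd hABC
    (quadratic_eq_zero_of_moebius_eq_self hω.ne_zero hfix)
  obtain ⟨u, rfl⟩ : Even w :=
    (Int.even_mul.mp (hda ▸ hσ)).resolve_right (Int.not_even_iff_odd.mpr hB)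
  refine ⟨σ 0 0 + u * B, u, ?_⟩
  ext i j
  fin_cases i <;> fin_cases j <;> simp [stabMatrix] <;> linarith

def pellSet (Δ : ℤ) (s : ℝ) : Set ℝ :=
  {x : ℝ | ∃ t u : ℤ, (t ^ 2 - Δ * u ^ 2 = 1 ∨ t ^ 2 - Δ * u ^ 2 = -1) ∧ x = t + u * s}

theorem pellSet_neg (Δ : ℤ) (s : ℝ) : pellSet Δ (-s) = pellSet Δ s := by
  suffices h : ∀ s : ℝ, pellSet Δ (-s) ⊆ pellSet Δ s from
    (h s).antisymm (by simpa using h (-s))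
  rintro s x ⟨t, u, hpell, rfl⟩
  exact ⟨t, -u, by rwa [neg_sq], by push_cast; ring⟩

theorem pellSet_sqrt {Δ : ℤ} {s : ℝ} (hs : s ^ 2 = Δ) : pellSet Δ (Real.sqrt Δ) = pellSet Δ s := by
  rw [← hs, Real.sqrt_sq_eq_abs]
  rcases abs_choice s with h | h <;> rw [h]
  exact pellSet_neg Δ s

theorem ne_zero_of_mem_pellSet {Δ : ℤ} {s x : ℝ} (hs : s ^ 2 = Δ) (hx : x ∈ pellSet Δ s) :
    x ≠ 0 := by
  obtain ⟨t, u, hpell, rfl⟩ := hx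
  intro h0
  have hnorm : ((t ^ 2 - Δ * u ^ 2 : ℤ) : ℝ) = (t + u * s) * (t - u * s) := by
    push_cast
    rw [← hs]
    ring
  rw [h0, zero_mul] at hnorm
  rcases hpell with h | h <;> rw [h] at hnorm <;> norm_num at hnorm

theorem stmt13_general (Δ : ℤ) (hΔ : Δ % 4 = 1) (ω : ℝ)
    (hdisc : HasDisc ω Δ) :
    (∀ σ : Matrix (Fin 2) (Fin 2) ℤ, IsTheta σ → moebius σ ω = ω →
        σ.map (Int.cast : ℤ → ZMod 2) = 1) ∧
    {x : ℝ | ∃ σ : Matrix (Fin 2) (Fin 2) ℤ, IsTheta σ ∧ moebius σ ω = ω ∧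
        x = (σ 1 0 : ℝ) * ω + (σ 1 1 : ℝ)} =
      {x : ℝ | ∃ t u : ℤ, (t ^ 2 - Δ * u ^ 2 = 1 ∨ t ^ 2 - Δ * u ^ 2 = -1) ∧
        x = (t : ℝ) + (u : ℝ) * Real.sqrt (Δ : ℝ)} := by
  obtain ⟨hω, A, B, C, hA, hgcd, hABC, rfl⟩ := hdisc
  have hB : Odd B := by
    rcases Int.even_or_odd B with ⟨k, rfl⟩ | hB
    · ring_nf at hΔ
      omega
    · exact hB
  have hstab : ∀ σ, IsTheta σ → moebius σ ω = ω → ∃ t u, σ = stabMatrix A B C t u :=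
    fun σ hσ => exists_eq_stabMatrix_of_moebius_eq_self hω hA.ne' hgcd hABC hB hσ.even_sub
  refine ⟨fun σ hσ hfix => ?_, ?_⟩
  · obtain ⟨t, u, rfl⟩ := hstab σ hσ hfix
    exact stabMatrix_map_zmod_two hσ.1
  · have hs : (2 * A * ω + B) ^ 2 = ((B ^ 2 - 4 * A * C : ℤ) : ℝ) := by
      push_cast
      linear_combination 4 * (A : ℝ) * hABC
    change _ = pellSet _ (Real.sqrt _)
    rw [pellSet_sqrt hs]
    ext x
    constructor
    · rintro ⟨σ, hσ, hfix, rfl⟩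
      obtain ⟨t, u, rfl⟩ := hstab σ hσ hfix
      exact ⟨t, u, isTheta_stabMatrix_iff.mp hσ, stabMatrix_lowerRow ω t u⟩
    · rintro ⟨t, u, hpell, rfl⟩
      exact ⟨stabMatrix A B C t u, isTheta_stabMatrix_iff.mpr hpell,
        moebius_stabMatrix hABC (ne_zero_of_mem_pellSet hs ⟨t, u, hpell, rfl⟩),
        (stabMatrix_lowerRow ω t u).symm⟩

theorem stmt13 (Δ : ℤ) (hΔ : Δ % 4 = 1) (ω : ℝ) (hω : 1 < ω)
    (hdisc : HasDisc ω Δ)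
    (hred : ∃ ω' : ℝ, IsConjPair ω ω' ∧ -1 < ω' ∧ ω' < 1) :
    (∀ σ : Matrix (Fin 2) (Fin 2) ℤ, IsTheta σ → moebius σ ω = ω →
        σ.map (Int.cast : ℤ → ZMod 2) = 1) ∧
    {x : ℝ | ∃ σ : Matrix (Fin 2) (Fin 2) ℤ, IsTheta σ ∧ moebius σ ω = ω ∧
        x = (σ 1 0 : ℝ) * ω + (σ 1 1 : ℝ)} =
      {x : ℝ | ∃ t u : ℤ, (t ^ 2 - Δ * u ^ 2 = 1 ∨ t ^ 2 - Δ * u ^ 2 = -1) ∧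
        x = (t : ℝ) + (u : ℝ) * Real.sqrt (Δ : ℝ)} :=
  stmt13_general Δ hΔ ω hdisc
end
end

section
/- Let ω > 1 be a quadratic irrational. Then the conjugate ω* lies in the interval (0,1) (i.e., ω is B-reduced) if and only if ω is a periodic point of the BCF Gauss shift, i.e., there exists n ≥ 1 with T_B^n(ω) = ω. -/
noncomputable section

/-- The BCF Gauss shift `T_B(u) = 1 / (1 + ⎣u⎦ - u)`. -/
def TB (u : ℝ) : ℝ := 1 / ((1 + ⌊u⌋ : ℤ) - u)


/-!
If `w > 1` and `s` are conjugate, `T_B` moves both by the same Möbius map `x ↦ 1 / (a - x)`,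
`a = 1 + ⌊w⌋ ≥ 2`, which preserves the discriminant. If `0 < s < 1`, this persists along the
orbit; reduced pairs of a fixed discriminant have bounded integer coefficients, so there are
finitely many, and the pair map is injective on them (`s` determines `a`), so every reduced pair
is periodic. Conversely, the map expands `|w - s|` whenever `⌊s⌋ = ⌊w⌋`, which cannot happen
all along a periodic orbit; once `⌊s⌋ ≠ ⌊w⌋`, the conjugate enters `(0, 1)` within two steps
and stays there, and periodicity brings it back to `ω*`.
-/

open Set Function

theorem Irrational.intCast_mul_add_intCast_eq_zero_iff {x : ℝ} (hx : Irrational x) {m n : ℤ} :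
    (m : ℝ) * x + n = 0 ↔ m = 0 ∧ n = 0 := by
  refine ⟨fun h => ?_, fun ⟨hm, hn⟩ => by simp [hm, hn]⟩
  obtain rfl : m = 0 := by
    by_contra hm
    exact hx ⟨-n / m, by push_cast; field_simp; linarith⟩
  exact ⟨rfl, by simpa using h⟩

theorem Function.IsPeriodicPt.exists_iterate_not_of_lt_apply {α β : Type*} [Preorder β]
    {f : α → α} {x : α} {n : ℕ} (hx : IsPeriodicPt f n x) (hn : 0 < n) (g : α → β)
    (P : α → Prop) (hg : ∀ m, P (f^[m] x) → g (f^[m] x) < g (f (f^[m] x))) :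
    ∃ m, ¬ P (f^[m] x) := by
  by_contra! h
  have hmono : StrictMono fun m => g (f^[m] x) := strictMono_nat_of_lt_succ fun m => by
    simpa only [iterate_succ_apply'] using hg m (h m)
  simpa [hx.eq] using hmono hn

theorem Function.IsPeriodicPt.mem_of_iterate_mem {α : Type*} {f : α → α} {x : α} {n k : ℕ}
    {S : Set α} (hx : IsPeriodicPt f n x) (hn : 0 < n) (hS : MapsTo f S S) (hk : f^[k] x ∈ S) :
    x ∈ S := by
  have := hS.iterate (n * k - k) hk
  rwa [← iterate_add_apply, Nat.sub_add_cancel (Nat.le_mul_of_pos_left k hn),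
    (hx.mul_const k).eq] at this

theorem Set.Finite.mem_periodicPts {α : Type*} {f : α → α} {S : Set α} {x : α} (hS : S.Finite)
    (hmaps : MapsTo f S S) (hinj : InjOn f S) (hx : x ∈ S) : x ∈ periodicPts f := by
  have := hS.to_subtype
  obtain ⟨n, hn, hper⟩ := (hmaps.restrict_inj.2 hinj).mem_periodicPts ⟨x, hx⟩
  exact ⟨n, hn, hper.map (g := Subtype.val) fun _ => rfl⟩

section Quadratic

variable {R : Type*} [CommRing R] [IsDomain R] {a b c w s : R}

theorem quadratic_eq_mul_sub_mul_sub (hne : w ≠ s) (hw : a * w ^ 2 + b * w + c = 0)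
    (hs : a * s ^ 2 + b * s + c = 0) (x : R) :
    a * x ^ 2 + b * x + c = a * (x - w) * (x - s) := by
  have hsum : a * (w + s) + b = 0 := by
    have : (a * (w + s) + b) * (w - s) = 0 := by linear_combination hw - hs
    exact (mul_eq_zero.1 this).resolve_right (sub_ne_zero.2 hne)
  linear_combination hw + (x - w) * hsum

theorem eq_or_eq_of_quadratic_eq_zero (ha : a ≠ 0) (hne : w ≠ s) (hw : a * w ^ 2 + b * w + c = 0)
    (hs : a * s ^ 2 + b * s + c = 0) {x : R} (hx : a * x ^ 2 + b * x + c = 0) :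
    x = w ∨ x = s := by
  rw [quadratic_eq_mul_sub_mul_sub hne hw hs] at hx
  simpa [ha, sub_eq_zero] using hx

end Quadratic

/-- Unlike `IsConjPair`, the coefficients need not be primitive, nor `A > 0`: this makes the
notion stable under `x ↦ 1 / (a - x)` without any gcd bookkeeping. -/
def ConjRoots (Δ : ℤ) (w s : ℝ) : Prop :=
  w ≠ s ∧ ∃ A B C : ℤ, A ≠ 0 ∧ (A : ℝ) * w ^ 2 + B * w + C = 0 ∧
    (A : ℝ) * s ^ 2 + B * s + C = 0 ∧ B ^ 2 - 4 * A * C = Δ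

namespace ConjRoots

variable {Δ : ℤ} {w s : ℝ}

theorem of_isConjPair (h : IsConjPair w s) : ∃ Δ, ConjRoots Δ w s := by
  obtain ⟨-, A, B, C, hA, -, hw, hs, hne⟩ := h
  exact ⟨_, hne.symm, A, B, C, hA.ne', hw, hs, rfl⟩

theorem irrational_right (h : ConjRoots Δ w s) (hw : Irrational w) : Irrational s := by
  obtain ⟨hne, A, B, C, hA, hw0, hs0, -⟩ := h
  have hA' : (A : ℝ) ≠ 0 := by exact_mod_cast hA
  have hfac := quadratic_eq_mul_sub_mul_sub hne hw0 hs0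
  have : s = ((-B / A : ℚ) : ℝ) - w := by
    push_cast
    field_simp
    linear_combination hfac 1 - hfac 0
  rw [this]
  exact Irrational.ratCast_sub _ hw

theorem one_div_intCast_sub (h : ConjRoots Δ w s) (a : ℤ) (hw : (a : ℝ) ≠ w) (hs : (a : ℝ) ≠ s) :
    ConjRoots Δ (1 / (a - w)) (1 / (a - s)) := by
  obtain ⟨hne, A, B, C, hA, hw0, hs0, rfl⟩ := h
  have hw' : (a : ℝ) - w ≠ 0 := sub_ne_zero.2 hw
  have hs' : (a : ℝ) - s ≠ 0 := sub_ne_zero.2 hs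
  have hlead : ((A * a ^ 2 + B * a + C : ℤ) : ℝ) = A * (a - w) * (a - s) := by
    push_cast
    exact quadratic_eq_mul_sub_mul_sub hne hw0 hs0 a
  refine ⟨?_, A * a ^ 2 + B * a + C, -(2 * A * a + B), A, ?_, ?_, ?_, by ring⟩
  · rw [Ne, one_div, one_div, inv_inj, sub_right_inj]
    exact hne
  · rw [← Int.cast_ne_zero (α := ℝ), hlead]
    exact mul_ne_zero (mul_ne_zero (by exact_mod_cast hA) hw') hs'
  · push_cast
    field_simp
    linear_combination hw0
  · push_cast
    field_simp
    linear_combination hs0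

theorem right_unique {Δ' : ℤ} {s' : ℝ} (hw : Irrational w) (h : ConjRoots Δ w s)
    (h' : ConjRoots Δ' w s') : s = s' := by
  obtain ⟨hne, A, B, C, hA, hw0, hs0, -⟩ := h
  obtain ⟨hne', A', B', C', hA', hw0', hs0', -⟩ := h'
  have hlin : ((A' * B - A * B' : ℤ) : ℝ) * w + ((A' * C - A * C' : ℤ) : ℝ) = 0 := by
    push_cast
    linear_combination (A' : ℝ) * hw0 - A * hw0'
  obtain ⟨hB, hC⟩ := hw.intCast_mul_add_intCast_eq_zero_iff.1 hlin
  have hB : (A' : ℝ) * B = A * B' := by exact_mod_cast sub_eq_zero.1 hB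
  have hC : (A' : ℝ) * C = A * C' := by exact_mod_cast sub_eq_zero.1 hC
  -- the polynomials are proportional, so `s'` is also a root of the first one
  have hs' : (A : ℝ) * s' ^ 2 + B * s' + C = 0 := by
    have : (A' : ℝ) * (A * s' ^ 2 + B * s' + C) = 0 := by
      linear_combination A * hs0' + s' * hB + hC
    exact (mul_eq_zero.1 this).resolve_left (by exact_mod_cast hA')
  rcases eq_or_eq_of_quadratic_eq_zero (by exact_mod_cast hA) hne hw0 hs0 hs' with h | h
  · exact absurd h.symm hne'
  · exact h.symm

end ConjRoots

theorem abs_coeff_le_disc {A B C : ℤ} {w s : ℝ} (hA : A ≠ 0) (hw1 : 1 < w) (hs0 : 0 < s)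
    (hs1 : s < 1) (hw : (A : ℝ) * w ^ 2 + B * w + C = 0) (hs : (A : ℝ) * s ^ 2 + B * s + C = 0) :
    |A| ≤ B ^ 2 - 4 * A * C ∧ |B| ≤ 2 * (B ^ 2 - 4 * A * C) ∧ |C| ≤ B ^ 2 - 4 * A * C := by
  wlog hApos : 0 < A generalizing A B C
  · have := this (A := -A) (B := -B) (C := -C) (neg_ne_zero.2 hA)
      (by push_cast; linear_combination -hw) (by push_cast; linear_combination -hs) (by omega)
    rwa [abs_neg, abs_neg, abs_neg, show (-B) ^ 2 - 4 * -A * -C = B ^ 2 - 4 * A * C by ring]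
      at this
  have hfac := quadratic_eq_mul_sub_mul_sub (by linarith) hw hs
  have hCpos : 0 < C := by
    have : (0 : ℝ) < C := by
      have h0 : (C : ℝ) = A * w * s := by linear_combination hfac 0
      rw [h0]
      have : (0 : ℝ) < A := by exact_mod_cast hApos
      exact mul_pos (mul_pos this (by linarith)) hs0
    exact_mod_cast this
  -- `δ = A (w - 1) (1 - s) > 0` and `Δ = (A - C)² + 2 (A + C) δ + δ²`
  have hδ : 0 < -B - A - C := by
    have : (0 : ℝ) < -B - A - C := by
      have h1 := hfac 1
      have : (0 : ℝ) < A := by exact_mod_cast hApos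
      nlinarith [mul_pos (mul_pos this (sub_pos.2 hw1)) (sub_pos.2 hs1)]
    exact_mod_cast this
  have hident :
      B ^ 2 - 4 * A * C = (A - C) ^ 2 + 2 * (A + C) * (-B - A - C) + (-B - A - C) ^ 2 := by
    ring
  rw [abs_of_pos hApos, abs_of_pos hCpos, abs_of_neg (by omega)]
  refine ⟨?_, ?_, ?_⟩ <;> nlinarith [sq_nonneg (A - C)]

theorem subsingleton_rootPairs {A B C : ℤ} (hA : A ≠ 0) :
    {p : ℝ × ℝ | 1 < p.1 ∧ p.2 < 1 ∧ (A : ℝ) * p.1 ^ 2 + B * p.1 + C = 0 ∧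
      (A : ℝ) * p.2 ^ 2 + B * p.2 + C = 0}.Subsingleton := by
  rintro ⟨w, s⟩ ⟨hw1, hs1, hw, hs⟩ ⟨w', s'⟩ ⟨hw1', hs1', hw', hs'⟩
  have hA' : (A : ℝ) ≠ 0 := by exact_mod_cast hA
  have hne : w ≠ s := by dsimp only at *; linarith
  have h1 := eq_or_eq_of_quadratic_eq_zero hA' hne hw hs hw'
  have h2 := eq_or_eq_of_quadratic_eq_zero hA' hne hw hs hs'
  dsimp only at *
  ext
  · rcases h1 with h | h <;> [exact h.symm; linarith]
  · rcases h2 with h | h <;> [linarith; exact h.symm]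

theorem one_lt_TB {u : ℝ} (hu : Irrational u) : 1 < TB u := by
  have hlt : ((1 + ⌊u⌋ : ℤ) : ℝ) - u < 1 := by
    push_cast
    linarith [(Int.floor_le u).lt_of_ne (hu.ne_int _).symm]
  have hpos : 0 < ((1 + ⌊u⌋ : ℤ) : ℝ) - u := by
    push_cast
    linarith [Int.lt_floor_add_one u]
  rw [TB, lt_div_iff₀ hpos]
  linarith

theorem irrational_TB {u : ℝ} (hu : Irrational u) : Irrational (TB u) := by
  rw [TB, one_div]
  exact (hu.intCast_sub _).inv

/-- The second component follows the conjugate of the first under the same map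
`x ↦ 1 / (a - x)`. -/
def TBPair (p : ℝ × ℝ) : ℝ × ℝ := (TB p.1, 1 / (((1 + ⌊p.1⌋ : ℤ) : ℝ) - p.2))

theorem fst_iterate_TBPair (n : ℕ) (p : ℝ × ℝ) : (TBPair^[n] p).1 = TB^[n] p.1 :=
  Semiconj.iterate_right (f := Prod.fst) (fun _ => rfl) n p

def quadPairs (Δ : ℤ) : Set (ℝ × ℝ) := {p | 1 < p.1 ∧ Irrational p.1 ∧ ConjRoots Δ p.1 p.2}

def reducedPairs (Δ : ℤ) : Set (ℝ × ℝ) := {p | p ∈ quadPairs Δ ∧ 0 < p.2 ∧ p.2 < 1}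

theorem mapsTo_TBPair_quadPairs (Δ : ℤ) : MapsTo TBPair (quadPairs Δ) (quadPairs Δ) := by
  rintro ⟨w, s⟩ ⟨-, hw, hroots⟩
  exact ⟨one_lt_TB hw, irrational_TB hw, hroots.one_div_intCast_sub _ (hw.ne_int _).symm
    ((hroots.irrational_right hw).ne_int _).symm⟩

theorem snd_TBPair_mem_Ioo {p : ℝ × ℝ} (h : p.2 < ⌊p.1⌋) :
    0 < (TBPair p).2 ∧ (TBPair p).2 < 1 := by
  have hgt : 1 < ((1 + ⌊p.1⌋ : ℤ) : ℝ) - p.2 := by push_cast; linarith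
  exact ⟨by simp only [TBPair]; positivity, (div_lt_one (by linarith)).2 hgt⟩

theorem mapsTo_TBPair_reducedPairs (Δ : ℤ) : MapsTo TBPair (reducedPairs Δ) (reducedPairs Δ) := by
  rintro p ⟨hp, -, hs1⟩
  have : (1 : ℝ) ≤ ⌊p.1⌋ := by exact_mod_cast Int.le_floor.2 (by exact_mod_cast hp.1.le)
  exact ⟨mapsTo_TBPair_quadPairs Δ hp, snd_TBPair_mem_Ioo (by linarith)⟩

theorem injOn_TBPair_reducedPairs (Δ : ℤ) : InjOn TBPair (reducedPairs Δ) := by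
  rintro ⟨w, s⟩ ⟨-, hs0, hs1⟩ ⟨w', s'⟩ ⟨-, hs0', hs1'⟩ h
  simp only [TBPair, TB, Prod.mk.injEq, one_div, inv_inj] at h hs0 hs1 hs0' hs1' ⊢
  obtain ⟨hw, hs⟩ := h
  -- the conjugates lie in `(0, 1)`, so they determine the integers `1 + ⌊w⌋` and `1 + ⌊w'⌋`
  have hfloor : ⌊w⌋ = ⌊w'⌋ := by
    have h1 : ((⌊w⌋ - ⌊w'⌋ : ℤ) : ℝ) < 1 := by push_cast at hs ⊢; linarith
    have h2 : (-1 : ℝ) < ((⌊w⌋ - ⌊w'⌋ : ℤ) : ℝ) := by push_cast at hs ⊢; linarith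
    have : ⌊w⌋ - ⌊w'⌋ < 1 := by exact_mod_cast h1
    have : -1 < ⌊w⌋ - ⌊w'⌋ := by exact_mod_cast h2
    omega
  rw [hfloor] at hw hs
  exact ⟨by linarith, by linarith⟩

theorem finite_reducedPairs (Δ : ℤ) : (reducedPairs Δ).Finite := by
  let box : Set (ℤ × ℤ × ℤ) := Icc (-Δ, -2 * Δ, -Δ) (Δ, 2 * Δ, Δ) ∩ {t | t.1 ≠ 0}
  have hbox : box.Finite := (finite_Icc _ _).inter_of_left _
  refine (hbox.biUnion fun t ht =>
    (subsingleton_rootPairs (B := t.2.1) (C := t.2.2) ht.2).finite).subset ?_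
  rintro ⟨w, s⟩ ⟨⟨hw1, -, -, A, B, C, hA, hw, hs, rfl⟩, hs0, hs1⟩
  obtain ⟨hA', hB', hC'⟩ := abs_coeff_le_disc hA hw1 hs0 hs1 hw hs
  rw [abs_le] at hA' hB' hC'
  refine mem_biUnion (x := (A, B, C)) ⟨⟨⟨hA'.1, by linarith [hB'.1], hC'.1⟩,
    ⟨hA'.2, by linarith [hB'.2], hC'.2⟩⟩, hA⟩ ⟨hw1, hs1, hw, hs⟩

theorem abs_sub_lt_abs_sub_TBPair {Δ : ℤ} {p : ℝ × ℝ} (hp : p ∈ quadPairs Δ)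
    (h : ⌊p.2⌋ = ⌊p.1⌋) : |p.1 - p.2| < |(TBPair p).1 - (TBPair p).2| := by
  obtain ⟨w, s⟩ := p
  obtain ⟨-, hw, hne, -⟩ := hp
  simp only [TBPair, TB] at h ⊢
  set a : ℤ := 1 + ⌊w⌋
  have hw0 : 0 < (a : ℝ) - w := by simp only [a]; push_cast; linarith [Int.lt_floor_add_one w]
  have hw1 : (a : ℝ) - w < 1 := by
    simp only [a]; push_cast; linarith [(Int.floor_le w).lt_of_ne (hw.ne_int _).symm]
  have hs0 : 0 < (a : ℝ) - s := by
    simp only [a]; push_cast; linarith [h ▸ Int.lt_floor_add_one s]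
  have hs1 : (a : ℝ) - s ≤ 1 := by
    simp only [a]; push_cast; linarith [h ▸ Int.floor_le s]
  -- `x ↦ 1 / (a - x)` expands distances on `(a - 1, a)`
  have hdiff : 1 / ((a : ℝ) - w) - 1 / (a - s) = (w - s) / ((a - w) * (a - s)) := by
    field_simp
    ring
  rw [hdiff, abs_div, abs_of_pos (mul_pos hw0 hs0), lt_div_iff₀ (mul_pos hw0 hs0)]
  have : ((a : ℝ) - w) * (a - s) < 1 := by nlinarith
  have : 0 < |w - s| := abs_pos.2 (sub_ne_zero.2 hne)
  nlinarith

theorem exists_iterate_TBPair_mem_reducedPairs {Δ : ℤ} {p : ℝ × ℝ} (hp : p ∈ quadPairs Δ)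
    (h : ⌊p.2⌋ ≠ ⌊p.1⌋) : ∃ k, TBPair^[k] p ∈ reducedPairs Δ := by
  have hq := mapsTo_TBPair_quadPairs Δ hp
  rcases lt_or_ge p.2 ⌊p.1⌋ with hlt | hge
  · exact ⟨1, hq, snd_TBPair_mem_Ioo hlt⟩
  · have hgt : ((1 + ⌊p.1⌋ : ℤ) : ℝ) < p.2 := by
      have : ⌊p.1⌋ < ⌊p.2⌋ := lt_of_le_of_ne (Int.le_floor.2 hge) h.symm
      refine lt_of_le_of_ne ?_ (((hp.2.2.irrational_right hp.2.1).ne_int _).symm)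
      exact (Int.cast_le.2 (by omega : 1 + ⌊p.1⌋ ≤ ⌊p.2⌋)).trans (Int.floor_le _)
    have hneg : (TBPair p).2 < 0 := one_div_neg.2 (sub_neg.2 hgt)
    have : (1 : ℝ) ≤ ⌊(TBPair p).1⌋ := by
      exact_mod_cast Int.le_floor.2 (by exact_mod_cast hq.1.le)
    exact ⟨2, mapsTo_TBPair_quadPairs Δ hq, snd_TBPair_mem_Ioo (by linarith)⟩

theorem isPeriodicPt_TBPair {Δ : ℤ} {ω ωs : ℝ} {n : ℕ} (hp : (ω, ωs) ∈ quadPairs Δ)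
    (h : IsPeriodicPt TB n ω) : IsPeriodicPt TBPair n (ω, ωs) := by
  have hfst : (TBPair^[n] (ω, ωs)).1 = ω := (fst_iterate_TBPair n _).trans h.eq
  obtain ⟨-, -, hroots⟩ := (mapsTo_TBPair_quadPairs Δ).iterate n hp
  rw [hfst] at hroots
  exact Prod.ext hfst (hp.2.2.right_unique hp.2.1 hroots).symm

theorem stmt15 (ω ωs : ℝ) (hω : 1 < ω) (hconj : IsConjPair ω ωs) :
    (0 < ωs ∧ ωs < 1) ↔ ∃ n ≥ 1, TB^[n] ω = ω := by
  obtain ⟨Δ, hroots⟩ := ConjRoots.of_isConjPair hconj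
  have hp : (ω, ωs) ∈ quadPairs Δ := ⟨hω, hconj.1, hroots⟩
  constructor
  · rintro ⟨hs0, hs1⟩
    obtain ⟨n, hn, hper⟩ := (finite_reducedPairs Δ).mem_periodicPts
      (mapsTo_TBPair_reducedPairs Δ) (injOn_TBPair_reducedPairs Δ) ⟨hp, hs0, hs1⟩
    exact ⟨n, hn, by simpa [fst_iterate_TBPair] using congrArg Prod.fst hper.eq⟩
  · rintro ⟨n, hn, hper⟩
    have hpair := isPeriodicPt_TBPair (n := n) hp hper
    have horbit := fun m => (mapsTo_TBPair_quadPairs Δ).iterate m hp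
    -- `|w - s|` cannot grow along the whole periodic orbit
    obtain ⟨m, hm⟩ := hpair.exists_iterate_not_of_lt_apply hn (fun p => |p.1 - p.2|)
      (fun p => ⌊p.2⌋ = ⌊p.1⌋) fun m => abs_sub_lt_abs_sub_TBPair (horbit m)
    obtain ⟨k, hk⟩ := exists_iterate_TBPair_mem_reducedPairs (horbit m) hm
    rw [← iterate_add_apply] at hk
    exact (hpair.mem_of_iterate_mem hn (mapsTo_TBPair_reducedPairs Δ) hk).2
end
end

section
/- Let u > 1 be irrational, and define its BCF convergents by p₀=1, q₀=0, p₁=a₁, q₁=1, and p_k = a_k p_{k−1} − p_{k−2}, q_k = a_k q_{k−1} − q_{k−2} for k ≥ 2, where a_k = 1 + ⌊T_B^{k−1}(u)⌋. Let σ = (p′, −p; q′, −q) be a matrix in SL(2,ℤ) with integer entries. Then the conditions p′ > q′ > q > 0, p′ > p > q, p′ − q′u > 0, and (p − qu)/(p′ − q′u) > 1 hold if and only if there exists n ≥ 2 with p′ = pₙ, q′ = qₙ, p = p_{n−1}, q = q_{n−1} (i.e., p′/q′ and p/q are consecutive BCF convergents of u). -/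
/-!
Put `β k = p k - q k * u`. The recurrence gives `β k = T_B^[k+1] u * β (k+1)` with
`T_B^[k+1] u > 1`, so `β` is positive and strictly decreasing, while `p`, `q` and `p - q` are
nondecreasing because every digit is at least `2`; this is the "if" direction. Conversely, given a
unimodular pair with `0 < p' - q' u < p - q u` and `0 ≤ q < q'`, choose the integer `a ≥ 2` with
`0 ≤ a q - q' < q`: then `(p, q), (a p - p', a q - q')` is a pair of the same kind with a smaller
denominator, and descending ends at `(p₁, q₁), (p₀, q₀)`. On the way back up,
`p' - q' u = (a - T_B^[k] u) β_k` lies strictly between `0` and `β_k`, which forces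
`a = 1 + ⌊T_B^[k] u⌋`, the next digit.
-/

noncomputable section

lemma sub_pos_of_one_add_floor (x : ℝ) : 0 < (((1 + ⌊x⌋ : ℤ) : ℝ) - x) := by
  push_cast
  linarith [Int.lt_floor_add_one x]

lemma TB_mul_sub_eq_one (x : ℝ) : TB x * (((1 + ⌊x⌋ : ℤ) : ℝ) - x) = 1 :=
  one_div_mul_cancel (sub_pos_of_one_add_floor x).ne'

lemma one_lt_TB_of_irrational {x : ℝ} (hx : Irrational x) : 1 < TB x := by
  refine one_lt_one_div (sub_pos_of_one_add_floor x) ?_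
  have : (⌊x⌋ : ℝ) < x := (Int.floor_le x).lt_of_ne (hx.ne_int ⌊x⌋).symm
  push_cast
  linarith

lemma irrational_TB_s16 {x : ℝ} (hx : Irrational x) : Irrational (TB x) := by
  simpa only [TB, one_div] using (hx.intCast_sub _).inv

lemma irrational_TB_iterate {x : ℝ} (hx : Irrational x) (k : ℕ) : Irrational (TB^[k] x) := by
  induction k with
  | zero => exact hx
  | succ k ih => rw [Function.iterate_succ_apply']; exact irrational_TB_s16 ih

lemma one_lt_TB_iterate_succ {x : ℝ} (hx : Irrational x) (k : ℕ) :
    1 < TB^[k + 1] x := by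
  rw [Function.iterate_succ_apply']
  exact one_lt_TB_of_irrational (irrational_TB_iterate hx k)

lemma two_le_one_add_floor_TB_iterate_succ {x : ℝ} (hx : Irrational x) (k : ℕ) :
    2 ≤ 1 + ⌊TB^[k + 1] x⌋ := by
  have : 1 ≤ ⌊TB^[k + 1] x⌋ := Int.le_floor.2 (by exact_mod_cast (one_lt_TB_iterate_succ hx k).le)
  omega

section SecondOrderRecurrence

variable {a x : ℕ → ℤ} (ha : ∀ k, 2 ≤ a k) (hx : ∀ k, x (k + 2) = a k * x (k + 1) - x k)
include ha hx

lemma le_and_sub_le_sub_of_recurrence (h0 : 0 ≤ x 0) (h01 : x 0 ≤ x 1) (k : ℕ) :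
    x 0 ≤ x k ∧ x 1 - x 0 ≤ x (k + 1) - x k := by
  induction k with
  | zero => simp
  | succ k ih =>
    have hk : x 0 ≤ x (k + 1) := by linarith [ih.1, ih.2]
    refine ⟨hk, ?_⟩
    have : 0 ≤ (a k - 2) * x (k + 1) := mul_nonneg (by linarith [ha k]) (by linarith)
    linarith [hx k, ih.2]

lemma monotone_of_recurrence (h0 : 0 ≤ x 0) (h01 : x 0 ≤ x 1) : Monotone x :=
  monotone_nat_of_le_succ fun k => by
    linarith [(le_and_sub_le_sub_of_recurrence ha hx h0 h01 k).2]

lemma strictMono_of_recurrence (h0 : 0 ≤ x 0) (h01 : x 0 < x 1) : StrictMono x :=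
  strictMono_nat_of_lt_succ fun k => by
    linarith [(le_and_sub_le_sub_of_recurrence ha hx h0 h01.le k).2]

end SecondOrderRecurrence

lemma exists_two_le_mul_sub_lt {b c : ℤ} (hb : 0 < b) (hbc : b < c) :
    ∃ a : ℤ, 2 ≤ a ∧ 0 ≤ a * b - c ∧ a * b - c < b := by
  refine ⟨(c - 1) / b + 1, ?_, ?_, ?_⟩
  · have : 1 ≤ (c - 1) / b := (Int.le_ediv_iff_mul_le hb).2 (by omega)
    omega
  · have := Int.lt_mul_ediv_self_add (x := c - 1) hb
    nlinarith
  · have := Int.mul_ediv_self_le (x := c - 1) hb.ne'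
    nlinarith

-- The recurrence is indexed from `k + 2`, which avoids the truncated subtractions `k - 1`, `k - 2`.
structure IsBCFConvergents (u : ℝ) (p q : ℕ → ℤ) : Prop where
  p_zero : p 0 = 1
  q_zero : q 0 = 0
  p_one : p 1 = 1 + ⌊u⌋
  q_one : q 1 = 1
  p_add_two : ∀ k, p (k + 2) = (1 + ⌊TB^[k + 1] u⌋) * p (k + 1) - p k
  q_add_two : ∀ k, q (k + 2) = (1 + ⌊TB^[k + 1] u⌋) * q (k + 1) - q k

namespace IsBCFConvergents

variable {u : ℝ} {p q : ℕ → ℤ} (hC : IsBCFConvergents u p q)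
include hC

lemma sub_mul_add_two (k : ℕ) :
    (p (k + 2) : ℝ) - q (k + 2) * u
      = (1 + ⌊TB^[k + 1] u⌋ : ℤ) * ((p (k + 1) : ℝ) - q (k + 1) * u) - ((p k : ℝ) - q k * u) := by
  rw [hC.p_add_two, hC.q_add_two]
  push_cast
  ring

lemma sub_mul_eq_TB_iterate_mul (k : ℕ) :
    (p k : ℝ) - q k * u = TB^[k + 1] u * ((p (k + 1) : ℝ) - q (k + 1) * u) := by
  induction k with
  | zero =>
    rw [Function.iterate_one, hC.p_zero, hC.q_zero, hC.p_one, hC.q_one]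
    linear_combination -(TB_mul_sub_eq_one u)
  | succ k ih =>
    rw [hC.sub_mul_add_two, ih, ← sub_mul, ← mul_assoc, Function.iterate_succ_apply' _ (k + 1),
      TB_mul_sub_eq_one, one_mul]

variable (hirr : Irrational u)
include hirr

lemma sub_mul_pos (k : ℕ) : 0 < (p k : ℝ) - q k * u := by
  induction k with
  | zero => simp [hC.p_zero, hC.q_zero]
  | succ k ih =>
    rw [hC.sub_mul_eq_TB_iterate_mul] at ih
    exact pos_of_mul_pos_right ih (zero_le_one.trans (one_lt_TB_iterate_succ hirr k).le)

lemma sub_mul_succ_lt (k : ℕ) :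
    (p (k + 1) : ℝ) - q (k + 1) * u < (p k : ℝ) - q k * u := by
  rw [hC.sub_mul_eq_TB_iterate_mul k]
  exact lt_mul_left (hC.sub_mul_pos hirr (k + 1)) (one_lt_TB_iterate_succ hirr k)

lemma strictMono_q : StrictMono q :=
  strictMono_of_recurrence (two_le_one_add_floor_TB_iterate_succ hirr) hC.q_add_two
    (by rw [hC.q_zero]) (by rw [hC.q_zero, hC.q_one]; norm_num)

lemma strictMono_p (hu : 1 ≤ u) : StrictMono p := by
  have : 1 ≤ ⌊u⌋ := Int.le_floor.2 (by exact_mod_cast hu)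
  exact strictMono_of_recurrence (two_le_one_add_floor_TB_iterate_succ hirr) hC.p_add_two
    (by rw [hC.p_zero]; norm_num) (by rw [hC.p_zero, hC.p_one]; omega)

lemma q_lt_p (hu : 1 ≤ u) (k : ℕ) : q k < p k := by
  have : 1 ≤ ⌊u⌋ := Int.le_floor.2 (by exact_mod_cast hu)
  have hmono : Monotone (p - q) :=
    monotone_of_recurrence (two_le_one_add_floor_TB_iterate_succ hirr)
    (fun k => by simp only [Pi.sub_apply, hC.p_add_two, hC.q_add_two]; ring)
    (by simp [hC.p_zero, hC.q_zero]) (by simp [hC.p_zero, hC.q_zero, hC.p_one, hC.q_one]; omega)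
  have := hmono (Nat.zero_le k)
  simp only [Pi.sub_apply, hC.p_zero, hC.q_zero] at this
  omega

lemma eq_add_two_of_sub_mul_pos_of_lt (k : ℕ) {a p' q' : ℤ} (hp' : p' = a * p (k + 1) - p k)
    (hq' : q' = a * q (k + 1) - q k) (hpos : 0 < (p' : ℝ) - q' * u)
    (hlt : (p' : ℝ) - q' * u < (p (k + 1) : ℝ) - q (k + 1) * u) :
    p' = p (k + 2) ∧ q' = q (k + 2) := by
  set w := TB^[k + 1] u
  have hβ := hC.sub_mul_pos hirr (k + 1)
  have hsplit : (p' : ℝ) - q' * u = (a - w) * ((p (k + 1) : ℝ) - q (k + 1) * u) := by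
    rw [hp', hq', sub_mul, ← hC.sub_mul_eq_TB_iterate_mul]
    push_cast
    ring
  rw [hsplit] at hpos hlt
  have h0 : 0 < a - w := pos_of_mul_pos_left hpos hβ.le
  have h1 : a - w < 1 := (mul_lt_iff_lt_one_left hβ).1 hlt
  have hfloor : ⌊w⌋ = a - 1 := by
    rw [Int.floor_eq_iff]
    push_cast
    constructor <;> linarith
  rw [hC.p_add_two, hC.q_add_two, hfloor, hp', hq']
  constructor <;> ring

theorem exists_eq_of_det {p' q' pp qq : ℤ} (hqq : 0 ≤ qq) (hlt : qq < q')
    (hdet : pp * q' - p' * qq = 1) (hpos : 0 < (p' : ℝ) - q' * u)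
    (hβ : (p' : ℝ) - q' * u < (pp : ℝ) - qq * u) :
    ∃ m, p' = p (m + 1) ∧ q' = q (m + 1) ∧ pp = p m ∧ qq = q m := by
  rcases hqq.eq_or_lt with rfl | hqq
  · have hq' : q' = 1 := Int.eq_one_of_mul_eq_one_left hlt.le (a := pp) (by linarith)
    obtain rfl : pp = 1 := by rw [hq'] at hdet; omega
    subst hq'
    have hfloor : ⌊u⌋ = p' - 1 := by
      rw [Int.floor_eq_iff]
      push_cast at hpos hβ ⊢
      constructor <;> linarith
    exact ⟨0, by rw [hC.p_one]; omega, hC.q_one.symm, hC.p_zero.symm, hC.q_zero.symm⟩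
  · obtain ⟨a, ha, hQ, hQlt⟩ := exists_two_le_mul_sub_lt hqq hlt
    have hβpp : (pp : ℝ) - qq * u < ((a * pp - p' : ℤ) : ℝ) - (a * qq - q' : ℤ) * u := by
      have : (2 : ℝ) ≤ a := by exact_mod_cast ha
      push_cast
      nlinarith
    obtain ⟨m, rfl, rfl, hP, hQ⟩ := exists_eq_of_det hQ hQlt (by linear_combination hdet)
      (hpos.trans hβ) hβpp
    obtain ⟨rfl, rfl⟩ :=
      hC.eq_add_two_of_sub_mul_pos_of_lt hirr m (a := a) (by linarith) (by linarith) hpos hβ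
    exact ⟨m + 1, rfl, rfl, rfl, rfl⟩
termination_by qq.toNat
decreasing_by omega

end IsBCFConvergents

theorem stmt16 (u : ℝ) (hu : 1 < u) (hirr : Irrational u)
    (p q : ℕ → ℤ)
    (hp0 : p 0 = 1) (hq0 : q 0 = 0) (hp1 : p 1 = 1 + ⌊u⌋) (hq1 : q 1 = 1)
    (hp : ∀ k, 2 ≤ k → p k = (1 + ⌊TB^[k - 1] u⌋) * p (k - 1) - p (k - 2))
    (hq : ∀ k, 2 ≤ k → q k = (1 + ⌊TB^[k - 1] u⌋) * q (k - 1) - q (k - 2))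
    (p' pp q' qq : ℤ) (hdet : p' * (-qq) - (-pp) * q' = 1) :
    (q' < p' ∧ qq < q' ∧ 0 < qq ∧ pp < p' ∧ qq < pp ∧
        0 < (p' : ℝ) - q' * u ∧ 1 < ((pp : ℝ) - qq * u) / ((p' : ℝ) - q' * u)) ↔
      ∃ n ≥ 2, p' = p n ∧ q' = q n ∧ pp = p (n - 1) ∧ qq = q (n - 1) := by
  have hC : IsBCFConvergents u p q :=
    ⟨hp0, hq0, hp1, hq1, fun k => hp (k + 2) (by omega), fun k => hq (k + 2) (by omega)⟩
  constructor
  · rintro ⟨-, hlt, hqq, -, -, hpos, hratio⟩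
    obtain ⟨m, rfl, rfl, rfl, rfl⟩ := hC.exists_eq_of_det hirr hqq.le hlt (by linarith) hpos
      ((one_lt_div hpos).1 hratio)
    have hm : m ≠ 0 := by rintro rfl; rw [hq0] at hqq; exact hqq.false
    exact ⟨m + 1, by omega, rfl, rfl, rfl, rfl⟩
  · rintro ⟨n, hn, rfl, rfl, rfl, rfl⟩
    obtain ⟨k, rfl⟩ := Nat.exists_eq_add_of_le' hn
    have hqmono := hC.strictMono_q hirr
    have hqk : q (k + 1) < q (k + 2) := hqmono (by omega)
    have hq0k : 0 < q (k + 1) := hq0 ▸ hqmono (by omega)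
    have hpk : p (k + 1) < p (k + 2) := hC.strictMono_p hirr hu.le (by omega)
    have hqp := hC.q_lt_p hirr hu.le
    exact ⟨hqp _, hqk, hq0k, hpk, hqp _, hC.sub_mul_pos hirr _,
      (one_lt_div (hC.sub_mul_pos hirr _)).2 (hC.sub_mul_succ_lt hirr _)⟩
end
end
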